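/- Let G be a triangle-free graph, let v be a vertex, and let P be an induced cycle of length 5 with all vertices in N^2(v), the set of vertices at distance exactly 2 from v. Then G contains an induced cycle of length 6. -/

import Mathlib

/-!
For each vertex `f i` of the 5-hole let `A i` be the set of common neighbours of `v` and `f i`;
every `A i` is nonempty since `dist v (f i) = 2`, and consecutive sets are disjoint because
`G` is triangle-free. If some `A i` and `A (i + 2)` are incomparable, pick `a ∈ A i \ A (i + 2)`
and `b ∈ A (i + 2) \ A i`: then `v, a, f i, f (i + 1), f (i + 2), b` is a 6-hole.
Otherwise consecutive sets along the pentagram `0, 2, 4, 1, 3` are comparable; as this cycle is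
odd, two consecutive comparabilities point the same way, giving `A i ⊆ A (i + 2) ⊆ A (i + 4)` or
the reverse, which is impossible since `A (i + 4)` and `A i` are nonempty and disjoint.
-/

def HasInducedCycle {V : Type*} (G : SimpleGraph V) (n : ℕ) : Prop :=
  ∃ f : ZMod n → V, Function.Injective f ∧
    ∀ i j : ZMod n, G.Adj (f i) (f j) ↔ (j = i + 1 ∨ i = j + 1)

theorem exists_not_le_and_not_le_add_two {α : Type*} [PartialOrder α] [OrderBot α]
    (A : ZMod 5 → α) (hne : ∀ i, A i ≠ ⊥) (hdisj : ∀ i, Disjoint (A i) (A (i + 1))) :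
    ∃ i, ¬ A i ≤ A (i + 2) ∧ ¬ A (i + 2) ≤ A i := by
  by_contra! hcomp
  have hnot_chain : ∀ i, ¬ A i ≤ A (i + 2 + 2) ∧ ¬ A (i + 2 + 2) ≤ A i := by
    intro i
    have h := hdisj (i + 2 + 2)
    rw [show i + 2 + 2 + 1 = i by grind] at h
    exact ⟨fun hle => hne i (h.symm.eq_bot_of_le hle), fun hle => hne _ (h.eq_bot_of_le hle)⟩
  have hflip : ∀ i, A i ≤ A (i + 2) ↔ ¬ A (i + 2) ≤ A (i + 2 + 2) := by
    refine fun i => ⟨fun h h' => (hnot_chain i).1 (h.trans h'), fun h => ?_⟩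
    by_contra h'
    exact (hnot_chain i).2 ((hcomp (i + 2) h).trans (hcomp i h'))
  have h₀ : A 0 ≤ A 2 ↔ ¬ A 2 ≤ A 4 := hflip 0
  have h₂ : A 2 ≤ A 4 ↔ ¬ A 4 ≤ A 1 := hflip 2
  have h₄ : A 4 ≤ A 1 ↔ ¬ A 1 ≤ A 3 := hflip 4
  have h₁ : A 1 ≤ A 3 ↔ ¬ A 3 ≤ A 0 := hflip 1
  have h₃ : A 3 ≤ A 0 ↔ ¬ A 0 ≤ A 2 := hflip 3
  tauto

namespace SimpleGraph

variable {V : Type*} {G : SimpleGraph V}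

theorem exists_adj_adj_of_dist_eq_two {u w : V} (h : G.dist u w = 2) :
    ∃ x, G.Adj u x ∧ G.Adj x w := by
  have hr : G.Reachable u w := Reachable.of_dist_ne_zero (by omega)
  have he : G.edist u w = 2 := by rw [← hr.coe_dist_eq_edist, h]; rfl
  obtain ⟨-, -, x, hx⟩ := edist_eq_two_iff.1 he
  exact ⟨x, (G.mem_commonNeighbors.1 hx).1, (G.mem_commonNeighbors.1 hx).2.symm⟩

theorem not_adj_of_dist_eq_two {u w : V} (h : G.dist u w = 2) : ¬ G.Adj u w := fun hadj => by
  rw [← dist_eq_one_iff_adj, h] at hadj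
  exact absurd hadj (by decide)

theorem CliqueFree.not_adj_of_adj_of_adj (hG : G.CliqueFree 3) {a b c : V}
    (hab : G.Adj a b) (hac : G.Adj a c) : ¬ G.Adj b c := fun hbc => by
  classical
  exact hG {a, b, c} (is3Clique_triple_iff.2 ⟨hab, hac, hbc⟩)

/-- Injectivity is automatic: `g i = g j` with `i ≠ j` forces `j = i + 2` and `j = i - 2`. -/
theorem hasInducedCycle_of_adj_iff {n : ℕ} (hn : (4 : ZMod n) ≠ 0) (g : ZMod n → V)
    (hg : ∀ i j, G.Adj (g i) (g j) ↔ (j = i + 1 ∨ i = j + 1)) : HasInducedCycle G n := by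
  refine ⟨g, fun i j hij => ?_, hg⟩
  by_contra hne
  have hsucc := (hg j (i + 1)).1 (hij ▸ (hg i (i + 1)).2 (.inl rfl))
  have hpred := (hg (i - 1) j).1 (hij ▸ (hg (i - 1) i).2 (.inl (by ring)))
  rcases hsucc with h | h
  · exact hne (add_right_cancel h)
  rcases hpred with h' | h'
  · exact hne (by rw [h']; ring)
  exact hn (by linear_combination -(h + h'))

theorem hasInducedCycle_six {a₀ a₁ a₂ a₃ a₄ a₅ : V}
    (h₀₁ : G.Adj a₀ a₁) (h₁₂ : G.Adj a₁ a₂) (h₂₃ : G.Adj a₂ a₃)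
    (h₃₄ : G.Adj a₃ a₄) (h₄₅ : G.Adj a₄ a₅) (h₅₀ : G.Adj a₅ a₀)
    (h₀₂ : ¬ G.Adj a₀ a₂) (h₀₃ : ¬ G.Adj a₀ a₃) (h₀₄ : ¬ G.Adj a₀ a₄)
    (h₁₃ : ¬ G.Adj a₁ a₃) (h₁₄ : ¬ G.Adj a₁ a₄) (h₁₅ : ¬ G.Adj a₁ a₅)
    (h₂₄ : ¬ G.Adj a₂ a₄) (h₂₅ : ¬ G.Adj a₂ a₅) (h₃₅ : ¬ G.Adj a₃ a₅) :
    HasInducedCycle G 6 := by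
  refine hasInducedCycle_of_adj_iff (by decide) ![a₀, a₁, a₂, a₃, a₄, a₅] fun i j => ?_
  have hall : ∀ k : ZMod 6, k = 0 ∨ k = 1 ∨ k = 2 ∨ k = 3 ∨ k = 4 ∨ k = 5 := by decide
  rcases hall i with rfl | rfl | rfl | rfl | rfl | rfl <;>
    rcases hall j with rfl | rfl | rfl | rfl | rfl | rfl <;>
    simp +decide [adj_comm, h₅₀.symm, *]

end SimpleGraph

open SimpleGraph

theorem stmt_3_general {V : Type*} (G : SimpleGraph V) (hTF : G.CliqueFree 3) (v : V)
    (f : ZMod 5 → V)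
    (hdist : ∀ i : ZMod 5, G.dist v (f i) = 2)
    (hadj : ∀ i j : ZMod 5, G.Adj (f i) (f j) ↔ (j = i + 1 ∨ i = j + 1)) :
    HasInducedCycle G 6 := by
  have hstep : ∀ i, G.Adj (f i) (f (i + 1)) := fun i => (hadj _ _).2 (.inl rfl)
  let A : ZMod 5 → Set V := fun i => {u | G.Adj v u ∧ G.Adj u (f i)}
  have hA_ne : ∀ i, A i ≠ ⊥ := fun i =>
    let ⟨u, hu⟩ := exists_adj_adj_of_dist_eq_two (hdist i)
    Set.nonempty_iff_ne_empty.1 ⟨u, hu⟩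
  have hA_disj : ∀ i, Disjoint (A i) (A (i + 1)) := fun i => Set.disjoint_left.2
    fun u hu hu' => hTF.not_adj_of_adj_of_adj hu.2 hu'.2 (hstep i)
  obtain ⟨i, hsub, hsub'⟩ := exists_not_le_and_not_le_add_two A hA_ne hA_disj
  obtain ⟨a, ha, ha'⟩ := Set.not_subset.1 hsub
  obtain ⟨b, hb, hb'⟩ := Set.not_subset.1 hsub'
  have hnext : G.Adj (f (i + 1)) (f (i + 2)) := by
    simpa only [add_assoc, one_add_one_eq_two] using hstep (i + 1)
  have hskip : ¬ G.Adj (f i) (f (i + 2)) := by rw [hadj]; grind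
  exact hasInducedCycle_six ha.1 ha.2 (hstep i) hnext hb.2.symm hb.1.symm
    (not_adj_of_dist_eq_two (hdist i)) (not_adj_of_dist_eq_two (hdist (i + 1)))
    (not_adj_of_dist_eq_two (hdist (i + 2))) (hTF.not_adj_of_adj_of_adj ha.2.symm (hstep i))
    (fun h => ha' ⟨ha.1, h⟩) (hTF.not_adj_of_adj_of_adj ha.1 hb.1) hskip
    (fun h => hb' ⟨hb.1, h.symm⟩) (hTF.not_adj_of_adj_of_adj hnext.symm hb.2.symm)

/-- if a triangle-free graph has an induced 5-cycle all of whose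
vertices lie at distance exactly 2 from a vertex `v`, then it contains an
induced cycle of length 6. -/
theorem stmt_3 {V : Type*} (G : SimpleGraph V) (hTF : G.CliqueFree 3) (v : V)
    (f : ZMod 5 → V) (hinj : Function.Injective f)
    (hdist : ∀ i : ZMod 5, G.dist v (f i) = 2)
    (hadj : ∀ i j : ZMod 5, G.Adj (f i) (f j) ↔ (j = i + 1 ∨ i = j + 1)) :
    HasInducedCycle G 6 :=
  stmt_3_general G hTF v f hdist hadj
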